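/- Let V be a finite-dimensional real normed vector space and C ⊆ V a nonempty closed convex set which is locally polyhedral with convex local cones (Γ_c)_{c ∈ C}. Suppose C ⊆ x + Γ for some x ∈ V and some closed convex proper cone Γ. If c ∈ C and the local cone Γ_c contains a line, i.e. there exists v ≠ 0 with v ∈ Γ_c and −v ∈ Γ_c, then there exists c' ∈ C such that c ∈ c' + Γ_{c'} and the lineality space Γ_{c'} ∩ (−Γ_{c'}) is strictly contained in the lineality space Γ_c ∩ (−Γ_c). -/
import Mathlib

open Pointwise

/-- A cone in a real vector space: contains `0` and is closed under
multiplication by nonnegative real scalars. -/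
def IsCone {V : Type*} [AddCommGroup V] [Module ℝ V] (Γ : Set V) : Prop :=
  (0 : V) ∈ Γ ∧ ∀ r : ℝ, 0 ≤ r → ∀ v ∈ Γ, r • v ∈ Γ

/-- A proper cone: a cone containing no line through the origin. -/
def IsProperCone {V : Type*} [AddCommGroup V] [Module ℝ V] (Γ : Set V) : Prop :=
  IsCone Γ ∧ ∀ v ∈ Γ, -v ∈ Γ → v = 0

/-- A convex cone is closed under addition. -/
lemma IsCone.add_mem {V : Type*} [AddCommGroup V] [Module ℝ V] {Γ : Set V}
    (hΓ : IsCone Γ) (hconv : Convex ℝ Γ) {a b : V} (ha : a ∈ Γ) (hb : b ∈ Γ) :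
    a + b ∈ Γ := by
  have h := hconv ha hb (by norm_num : (0:ℝ) ≤ 1/2) (by norm_num : (0:ℝ) ≤ 1/2) (by norm_num)
  have h2 := hΓ.2 2 (by norm_num) _ h
  have : (2:ℝ) • ((1/2 : ℝ) • a + (1/2 : ℝ) • b) = a + b := by module
  rwa [this] at h2

/-- Small steps in a cone direction stay in `C`. -/
lemma small_step {V : Type*} [NormedAddCommGroup V] [NormedSpace ℝ V]
    {C : Set V} {Γc : Set V} {c : V} (hcone : IsCone Γc)
    {U : Set V} (hU : U ∈ nhds c) (heq : C ∩ U = (c +ᵥ Γc) ∩ U)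
    {w : V} (hw : w ∈ Γc) (ε : ℝ) (hε : 0 < ε) :
    ∃ δ : ℝ, 0 < δ ∧ δ ≤ ε ∧ c + δ • w ∈ C := by
  have hcont : Filter.Tendsto (fun δ : ℝ => c + δ • w) (nhds 0) (nhds c) := by
    have hs : Continuous (fun δ : ℝ => δ • w) := continuous_id.smul continuous_const
    have h : Filter.Tendsto (fun δ : ℝ => c + δ • w) (nhds 0) (nhds (c + (0:ℝ) • w)) :=
      (continuous_const.add hs).tendsto (0:ℝ)
    simpa using h
  have hev : ∀ᶠ δ : ℝ in nhds 0, c + δ • w ∈ U := hcont.eventually hU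
  rcases Metric.eventually_nhds_iff.mp hev with ⟨δ₁, hδ₁, hball⟩
  refine ⟨min ε (δ₁/2), by positivity, min_le_left _ _, ?_⟩
  have hmemU : c + (min ε (δ₁/2)) • w ∈ U := by
    apply hball
    rw [Real.dist_eq, sub_zero, abs_of_pos (by positivity)]
    have : min ε (δ₁/2) ≤ δ₁/2 := min_le_right _ _
    linarith
  have hmemΓ : c + (min ε (δ₁/2)) • w ∈ c +ᵥ Γc := by
    rw [Set.mem_vadd_set_iff_neg_vadd_mem]
    have : -c +ᵥ (c + (min ε (δ₁/2)) • w) = (min ε (δ₁/2)) • w := by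
      simp [vadd_eq_add]
    rw [this]
    exact hcone.2 _ (by positivity) _ hw
  have : c + (min ε (δ₁/2)) • w ∈ C ∩ U := by
    rw [heq]; exact ⟨hmemΓ, hmemU⟩
  exact this.1

/-- Membership detection via the local cone. -/
lemma mem_iff_local {V : Type*} [NormedAddCommGroup V] [NormedSpace ℝ V]
    {C : Set V} {Γc : Set V} {c : V}
    {U : Set V} (heq : C ∩ U = (c +ᵥ Γc) ∩ U)
    {y : V} (hy : y ∈ U) : y ∈ C ↔ -c + y ∈ Γc := by
  constructor
  · intro h
    have : y ∈ (c +ᵥ Γc) ∩ U := heq ▸ ⟨h, hy⟩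
    exact Set.mem_vadd_set_iff_neg_vadd_mem.mp this.1
  · intro h
    have : y ∈ (c +ᵥ Γc) ∩ U := ⟨Set.mem_vadd_set_iff_neg_vadd_mem.mpr h, hy⟩
    rw [← heq] at this
    exact this.1

/-- If a ray from a point of `C` stays in `C ⊆ x +ᵥ Γ` with `Γ` a closed cone,
then the direction lies in `Γ`. -/
lemma ray_mem_cone {V : Type*} [NormedAddCommGroup V] [NormedSpace ℝ V]
    {C : Set V} {x : V} {Γ : Set V} (hΓclosed : IsClosed Γ) (hΓcone : IsCone Γ)
    (hsub : C ⊆ x +ᵥ Γ) {c v : V} (hray : ∀ t : ℝ, 0 ≤ t → c + t • v ∈ C) :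
    v ∈ Γ := by
  have hmem : ∀ n : ℕ, (1 / ((n:ℝ) + 1)) • (c - x) + v ∈ Γ := by
    intro n
    have h1 : c + ((n:ℝ) + 1) • v ∈ C := hray _ (by positivity)
    have h2 : -x + (c + ((n:ℝ) + 1) • v) ∈ Γ :=
      Set.mem_vadd_set_iff_neg_vadd_mem.mp (hsub h1)
    have h3 := hΓcone.2 (1 / ((n:ℝ) + 1)) (by positivity) _ h2
    have heq : (1 / ((n:ℝ) + 1)) • (-x + (c + ((n:ℝ) + 1) • v))
        = (1 / ((n:ℝ) + 1)) • (c - x) + v := by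
      have hne : (n:ℝ) + 1 ≠ 0 := by positivity
      rw [smul_add, smul_add, smul_smul, one_div, inv_mul_cancel₀ hne, one_smul]
      module
    rwa [heq] at h3
  have htend : Filter.Tendsto (fun n : ℕ => (1 / ((n:ℝ) + 1)) • (c - x) + v)
      Filter.atTop (nhds v) := by
    have h0 : Filter.Tendsto (fun n : ℕ => (1 / ((n:ℝ) + 1)) • (c - x))
        Filter.atTop (nhds ((0:ℝ) • (c - x))) :=
      (tendsto_one_div_add_atTop_nhds_zero_nat).smul_const _
    simpa using h0.add_const v
  exact hΓclosed.mem_of_tendsto htend (Filter.Eventually.of_forall hmem)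

/-- The descent step, assuming the ray in direction `v` eventually leaves `C`. -/
lemma descent_step {V : Type*} [NormedAddCommGroup V] [NormedSpace ℝ V]
    (C : Set V) (hclosed : IsClosed C) (hconv : Convex ℝ C)
    (Γloc : V → Set V)
    (hΓcone : ∀ c ∈ C, IsCone (Γloc c))
    (hΓconv : ∀ c ∈ C, Convex ℝ (Γloc c))
    (hlocal : ∀ c ∈ C, ∃ U ∈ nhds c, C ∩ U = (c +ᵥ Γloc c) ∩ U)
    (c : V) (hc : c ∈ C) (v : V) (hvΓ : v ∈ Γloc c) (hvΓ' : -v ∈ Γloc c)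
    (t0 : ℝ) (ht0 : 0 ≤ t0) (hesc : c + t0 • v ∉ C) :
    ∃ c' ∈ C, c ∈ c' +ᵥ Γloc c' ∧
      (Γloc c' ∩ (-(Γloc c'))) ⊂ (Γloc c ∩ (-(Γloc c))) := by
  obtain ⟨U, hU, heq⟩ := hlocal c hc
  set T : Set ℝ := {t : ℝ | 0 ≤ t ∧ c + t • v ∈ C} with hT
  have hT0 : (0:ℝ) ∈ T := ⟨le_refl 0, by simpa using hc⟩
  have hTne : T.Nonempty := ⟨0, hT0⟩
  have hTbdd : BddAbove T := by
    refine ⟨t0, fun t ht => ?_⟩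
    by_contra hlt
    push_neg at hlt
    have htpos : 0 < t := lt_of_le_of_lt ht0 hlt
    have h01 : 0 ≤ t0 / t := by positivity
    have h02 : t0 / t ≤ 1 := by
      rw [div_le_one htpos]; linarith
    have := hconv hc ht.2 (by linarith : (0:ℝ) ≤ 1 - t0/t) h01 (by ring)
    have heq2 : (1 - t0/t) • c + (t0/t) • (c + t • v) = c + t0 • v := by
      have : (t0/t) * t = t0 := div_mul_cancel₀ t0 (ne_of_gt htpos)
      rw [smul_add, smul_smul, this]
      module
    rw [heq2] at this
    exact hesc this
  have hTclosed : IsClosed T := by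
    have : T = Set.Ici (0:ℝ) ∩ (fun t : ℝ => c + t • v) ⁻¹' C := by
      ext t; simp [hT, Set.mem_Ici]
    rw [this]
    exact isClosed_Ici.inter (hclosed.preimage (by fun_prop))
  set ts := sSup T with hts
  have htsT : ts ∈ T := hTclosed.csSup_mem hTne hTbdd
  have htspos : 0 < ts := by
    obtain ⟨δ, hδpos, _, hδC⟩ := small_step (hΓcone c hc) hU heq hvΓ 1 one_pos
    have : δ ∈ T := ⟨le_of_lt hδpos, hδC⟩
    exact lt_of_lt_of_le hδpos (le_csSup hTbdd this)
  set c' := c + ts • v with hc'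
  have hc'C : c' ∈ C := htsT.2
  obtain ⟨U', hU', heq'⟩ := hlocal c' hc'C
  -- segment from c to c' lies in C
  have hseg : ∀ t : ℝ, 0 ≤ t → t ≤ ts → c + t • v ∈ C := by
    intro t htn hts'
    have h01 : 0 ≤ t / ts := by positivity
    have h02 : t / ts ≤ 1 := by rw [div_le_one htspos]; exact hts'
    have := hconv hc hc'C (by linarith : (0:ℝ) ≤ 1 - t/ts) h01 (by ring)
    have heq2 : (1 - t/ts) • c + (t/ts) • c' = c + t • v := by
      rw [hc', smul_add, smul_smul, div_mul_cancel₀ t (ne_of_gt htspos)]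
      module
    rwa [heq2] at this
  -- -v ∈ Γloc c'
  have hnegv : -v ∈ Γloc c' := by
    have hcont : Filter.Tendsto (fun δ : ℝ => c' + δ • (-v)) (nhds 0) (nhds c') := by
      have hs : Continuous (fun δ : ℝ => δ • (-v)) := continuous_id.smul continuous_const
      have h : Filter.Tendsto (fun δ : ℝ => c' + δ • (-v)) (nhds 0) (nhds (c' + (0:ℝ) • (-v))) :=
        (continuous_const.add hs).tendsto (0:ℝ)
      simpa using h
    rcases Metric.eventually_nhds_iff.mp (hcont.eventually hU') with ⟨δ₁, hδ₁, hball⟩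
    set δ := min (ts/2) (δ₁/2) with hδ
    have hδpos : 0 < δ := by positivity
    have hmemU : c' + δ • (-v) ∈ U' := by
      apply hball
      rw [Real.dist_eq, sub_zero, abs_of_pos hδpos]
      have : δ ≤ δ₁/2 := min_le_right _ _
      linarith
    have hmemC : c' + δ • (-v) ∈ C := by
      have h1 : c' + δ • (-v) = c + (ts - δ) • v := by rw [hc']; module
      rw [h1]
      exact hseg _ (by have := min_le_left (ts/2) (δ₁/2); simp only [hδ]; linarith)
        (by linarith)
    have hmemΓ : -c' + (c' + δ • (-v)) ∈ Γloc c' := (mem_iff_local heq' hmemU).mp hmemC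
    have h2 : -c' + (c' + δ • (-v)) = δ • (-v) := by abel
    rw [h2] at hmemΓ
    have := (hΓcone c' hc'C).2 δ⁻¹ (by positivity) _ hmemΓ
    rwa [smul_smul, inv_mul_cancel₀ (ne_of_gt hδpos), one_smul] at this
  have hcmem : c ∈ c' +ᵥ Γloc c' := by
    rw [Set.mem_vadd_set_iff_neg_vadd_mem]
    have h1 : -c' +ᵥ c = ts • (-v) := by rw [vadd_eq_add, hc']; module
    rw [h1]
    exact (hΓcone c' hc'C).2 ts (le_of_lt htspos) _ hnegv
  -- v ∉ Γloc c'
  have hvnot : v ∉ Γloc c' := by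
    intro hvin
    obtain ⟨δ, hδpos, _, hδC⟩ := small_step (hΓcone c' hc'C) hU' heq' hvin 1 one_pos
    have hmemT : ts + δ ∈ T := by
      refine ⟨by linarith, ?_⟩
      have : c + (ts + δ) • v = c' + δ • v := by rw [hc']; module
      rw [this]; exact hδC
    have := le_csSup hTbdd hmemT
    linarith
  -- lineality inclusion
  have hincl : ∀ w, w ∈ Γloc c' → -w ∈ Γloc c' → w ∈ Γloc c := by
    intro w hw hw'
    rcases eq_or_ne w 0 with rfl | hwne
    · exact (hΓcone c hc).1
    obtain ⟨δ, hδpos, _, hδC⟩ := small_step (hΓcone c' hc'C) hU' heq' hw 1 one_pos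
    -- points on segment from c to c' + δ • w
    have hcont : Filter.Tendsto (fun s : ℝ => c + s • (ts • v + δ • w)) (nhds 0) (nhds c) := by
      have hs : Continuous (fun s : ℝ => s • (ts • v + δ • w)) := continuous_id.smul continuous_const
      have h : Filter.Tendsto (fun s : ℝ => c + s • (ts • v + δ • w)) (nhds 0)
          (nhds (c + (0:ℝ) • (ts • v + δ • w))) :=
        (continuous_const.add hs).tendsto (0:ℝ)
      simpa using h
    rcases Metric.eventually_nhds_iff.mp (hcont.eventually hU) with ⟨s₁, hs₁, hball⟩
    set s := min (1/2 : ℝ) (s₁/2) with hs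
    have hspos : 0 < s := by positivity
    have hsle : s ≤ 1 := le_trans (min_le_left _ _) (by norm_num)
    have hmemU : c + s • (ts • v + δ • w) ∈ U := by
      apply hball
      rw [Real.dist_eq, sub_zero, abs_of_pos hspos]
      have : s ≤ s₁/2 := min_le_right _ _
      linarith
    have hmemC : c + s • (ts • v + δ • w) ∈ C := by
      have := hconv hc hδC (by linarith : (0:ℝ) ≤ 1 - s) (le_of_lt hspos) (by ring)
      have heq2 : (1 - s) • c + s • (c' + δ • w) = c + s • (ts • v + δ • w) := by
        rw [hc']; module
      rwa [heq2] at this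
    have hmemΓ : -c + (c + s • (ts • v + δ • w)) ∈ Γloc c := (mem_iff_local heq hmemU).mp hmemC
    have h2 : -c + (c + s • (ts • v + δ • w)) = s • (ts • v + δ • w) := by abel
    rw [h2] at hmemΓ
    have h3 := (hΓcone c hc).2 s⁻¹ (by positivity) _ hmemΓ
    rw [smul_smul, inv_mul_cancel₀ (ne_of_gt hspos), one_smul] at h3
    -- now ts • v + δ • w ∈ Γloc c; add ts • (-v)
    have h4 : ts • (-v) ∈ Γloc c := (hΓcone c hc).2 ts (le_of_lt htspos) _ hvΓ'
    have h5 := (hΓcone c hc).add_mem (hΓconv c hc) h3 h4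
    have h6 : ts • v + δ • w + ts • (-v) = δ • w := by module
    rw [h6] at h5
    have h7 := (hΓcone c hc).2 δ⁻¹ (by positivity) _ h5
    rwa [smul_smul, inv_mul_cancel₀ (ne_of_gt hδpos), one_smul] at h7
  refine ⟨c', hc'C, hcmem, ?_⟩
  constructor
  · rintro w ⟨hw1, hw2⟩
    rw [Set.mem_neg] at hw2
    refine ⟨hincl w hw1 hw2, ?_⟩
    rw [Set.mem_neg]
    exact hincl (-w) hw2 (by rwa [neg_neg])
  · intro hsubset
    exact hvnot (hsubset ⟨hvΓ, by rwa [Set.mem_neg]⟩).1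

/-- The descent step in the proof of Proposition 4.6: if the local cone at `c` contains
a line, then `c` lies in a translated local cone whose lineality space is strictly
smaller. -/
theorem exists_point_with_smaller_lineality
    {V : Type*} [NormedAddCommGroup V] [NormedSpace ℝ V] [FiniteDimensional ℝ V]
    (C : Set V) (hne : C.Nonempty) (hclosed : IsClosed C) (hconv : Convex ℝ C)
    (Γloc : V → Set V)
    (hΓcone : ∀ c ∈ C, IsCone (Γloc c))
    (hΓconv : ∀ c ∈ C, Convex ℝ (Γloc c))
    (hlocal : ∀ c ∈ C, ∃ U ∈ nhds c, C ∩ U = (c +ᵥ Γloc c) ∩ U)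
    (x : V) (Γ : Set V) (hΓclosed : IsClosed Γ) (hΓconvex : Convex ℝ Γ)
    (hΓproper : IsProperCone Γ)
    (hsub : C ⊆ x +ᵥ Γ)
    (c : V) (hc : c ∈ C) (v : V) (hv : v ≠ 0) (hvΓ : v ∈ Γloc c) (hvΓ' : -v ∈ Γloc c) :
    ∃ c' ∈ C, c ∈ c' +ᵥ Γloc c' ∧
      (Γloc c' ∩ (-(Γloc c'))) ⊂ (Γloc c ∩ (-(Γloc c))) := by
  by_cases h1 : ∀ t : ℝ, 0 ≤ t → c + t • v ∈ C
  · by_cases h2 : ∀ t : ℝ, 0 ≤ t → c + t • (-v) ∈ C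
    · exfalso
      have hvΓmem : v ∈ Γ := ray_mem_cone hΓclosed hΓproper.1 hsub h1
      have hnvΓmem : -v ∈ Γ := ray_mem_cone hΓclosed hΓproper.1 hsub h2
      exact hv (hΓproper.2 v hvΓmem hnvΓmem)
    · push_neg at h2
      obtain ⟨t0, ht0, hesc⟩ := h2
      exact descent_step C hclosed hconv Γloc hΓcone hΓconv hlocal c hc (-v)
        hvΓ' (by rwa [neg_neg]) t0 ht0 hesc
  · push_neg at h1
    obtain ⟨t0, ht0, hesc⟩ := h1
    exact descent_step C hclosed hconv Γloc hΓcone hΓconv hlocal c hc v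
      hvΓ hvΓ' t0 ht0 hesc
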